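/- Let f:(0,∞)→(0,∞) be a function such that there exist constants c₁,p>0 with s^p f(s) ≤ c₁ t^p f(t) for all 0<s≤t. Suppose (Poly-R₁) holds. Then for every T>0 there exists a constant C=C(T,c₁,p)>0 such that for all t∈(0,T] and all 0<r≤1/φ^{−1}(1/t), E[f(S_t); S_t≤r] ≤ C f(r) exp(−(t/2)(H∘σ)(t,r)). Moreover, if (Poly-∞) holds, then there exists C=C(c₁,p)>0 such that the inequality holds for all t>0 and all 0<r≤1/φ^{−1}(1/t). -/

import Mathlib

open MeasureTheory Real Set
open scoped ENNReal

/-- Tail of the Lévy measure: `w(r) = ν((r,∞))`. -/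
noncomputable def levyTail (ν : Measure ℝ) (r : ℝ) : ℝ := (ν (Set.Ioi r)).toReal

/-- Laplace exponent `φ(λ) = ∫ (1 - e^{-λ s}) ν(ds)`. -/
noncomputable def laplaceExp (ν : Measure ℝ) (lam : ℝ) : ℝ :=
  ∫ s, (1 - Real.exp (-(lam * s))) ∂ν

/-- Condition (Poly-R₁); (Poly-∞) is the case `R₁ = ⊤`. -/
def PolyCond (ν : Measure ℝ) (R₁ : ℝ≥0∞) (c c' β₁ β₂ : ℝ) : Prop :=
  ∀ r R : ℝ, 0 < r → r ≤ R → ENNReal.ofReal R < R₁ →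
    c * (R / r) ^ β₁ ≤ levyTail ν r / levyTail ν R ∧
      levyTail ν r / levyTail ν R ≤ c' * (R / r) ^ β₂

/-- `ν` is the Lévy measure of a driftless subordinator. -/
structure IsLevyMeasure (ν : Measure ℝ) : Prop where
  supp : ν (Set.Iic 0) = 0
  tail_fin : ∀ r : ℝ, 0 < r → ν (Set.Ioi r) < ⊤
  integ : IntegrableOn (fun s => s) (Set.Ioc (0:ℝ) 1) ν

/-- `μ t` is the law of `S_t` for the driftless subordinator with Lévy measure `ν`. -/
structure IsSubordinatorLaw (ν : Measure ℝ) (μ : ℝ → Measure ℝ) : Prop where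
  levy : IsLevyMeasure ν
  prob : ∀ t : ℝ, 0 < t → IsProbabilityMeasure (μ t)
  nonneg : ∀ t : ℝ, 0 < t → μ t (Set.Iio 0) = 0
  laplace : ∀ t lam : ℝ, 0 < t → 0 ≤ lam →
    (∫ s, Real.exp (-(lam * s)) ∂(μ t)) = Real.exp (-(t * laplaceExp ν lam))

/-- `H(λ) = φ(λ) - λ φ'(λ)`. -/
noncomputable def Hfun (ν : Measure ℝ) (lam : ℝ) : ℝ :=
  laplaceExp ν lam - lam * deriv (laplaceExp ν) lam

/-- `σ(t,s) = (φ')⁻¹(s/t)` if `s/t < φ'(0+)`, and `σ(t,s) = 0` otherwise. -/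
def IsSigmaFun (ν : Measure ℝ) (σ : ℝ → ℝ → ℝ) : Prop :=
  ∀ t s : ℝ, 0 < t → 0 < s →
    ((∃ lam : ℝ, 0 < lam ∧ s / t < deriv (laplaceExp ν) lam) →
      0 < σ t s ∧ deriv (laplaceExp ν) (σ t s) = s / t) ∧
    ((∀ lam : ℝ, 0 < lam → deriv (laplaceExp ν) lam ≤ s / t) → σ t s = 0)

/-- `φInv` is the inverse of the Laplace exponent `φ` on `(0,∞)`. -/
def IsPhiInv (ν : Measure ℝ) (φInv : ℝ → ℝ) : Prop :=
  ∀ u : ℝ, 0 < u → 0 < φInv u ∧ laplaceExp ν (φInv u) = u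

/-- `HInv` is the inverse of `H` on `(0,∞)`. -/
def IsHInv (ν : Measure ℝ) (HInv : ℝ → ℝ) : Prop :=
  ∀ u : ℝ, 0 < u → 0 < HInv u ∧ Hfun ν (HInv u) = u

/-!
The tangent-line inequality of the concave function `φ` shows that `σ(t,ρ)` maximises
`λ ↦ tφ(λ) - λρ` over `λ ≥ 0`, with maximum `A(ρ) := t H(σ(t,ρ))`. Hence Chernoff's bound gives
`P(S_t ≤ ρ) ≤ exp (-A(ρ))`; taking `λ = σ(t,r)` shows that `A` is nonincreasing, and taking
`λ = K^n/r` gives `A(r/K^n) ≥ tφ(K^n/r) - 1`. Cut `(0, r]` into the shells `(r/K^(n+1), r/K^n]`: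
on the `n`-th shell `f ≤ c₁ K^((n+1)p) f(r)`, and its probability is at most
`exp (-A(r/K^n)) ≤ exp (-A(r)/2) exp (-A(r/K^n)/2)`. Since `φ(λ)` is comparable to
`λ ∫₀^{1/λ} w`, the lower scaling of the tail `w` makes `tφ(K^n/r)` grow geometrically in `n` once
`r ≤ 1/φ⁻¹(1/t)` and `r/K^n < R₁`, so the shell contributions are summable. For `t ≤ T` the second
condition holds after a number of shells depending only on `T`, and from the start when `R₁ = ∞`.
-/

open Filter ProbabilityTheory

lemma one_sub_exp_neg_nonneg {y : ℝ} (hy : 0 ≤ y) : 0 ≤ 1 - exp (-y) :=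
  sub_nonneg.2 (exp_le_one_iff.2 (neg_nonpos.2 hy))

lemma one_sub_exp_neg_le_min (y : ℝ) : 1 - exp (-y) ≤ min y 1 :=
  le_min (by linarith [add_one_le_exp (-y)]) (by linarith [exp_pos (-y)])

lemma min_le_exp_one_mul_one_sub_exp_neg {y : ℝ} (hy : 0 ≤ y) :
    min y 1 ≤ exp 1 * (1 - exp (-y)) := by
  rw [← div_le_iff₀' (exp_pos 1)]
  rcases le_total y 1 with h | h
  · have hy_exp : (1 + y) * exp (-y) ≤ 1 := by
      calc (1 + y) * exp (-y) ≤ exp y * exp (-y) := by gcongr; linarith [add_one_le_exp y]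
        _ = 1 := by rw [← exp_add, add_neg_cancel, exp_zero]
    have : exp (-1) ≤ exp (-y) := exp_le_exp.2 (by linarith)
    rw [min_eq_left h, div_eq_mul_inv, ← exp_neg]
    nlinarith
  · have he : exp (-1) ≤ 1 / 2 := by
      rw [exp_neg, inv_le_comm₀ (exp_pos 1) (by norm_num)]
      linarith [add_one_le_exp 1]
    have : exp (-y) ≤ exp (-1) := exp_le_exp.2 (by linarith)
    rw [min_eq_right h, one_div, ← exp_neg]
    linarith

lemma mul_exp_neg_le_min {b s : ℝ} (hb : 0 < b) (hs : 0 ≤ s) :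
    s * exp (-(b * s)) ≤ min s b⁻¹ := by
  refine le_min (mul_le_of_le_one_right hs (exp_le_one_iff.2 (by nlinarith))) ?_
  rw [exp_neg, ← div_eq_mul_inv, div_le_iff₀ (exp_pos _), le_inv_mul_iff₀ hb]
  linarith [add_one_le_exp (b * s)]

lemma min_mul_le_max_mul_min {x s : ℝ} (hs : 0 ≤ s) :
    min (x * s) 1 ≤ max x 1 * min s 1 := by
  rw [mul_min_of_nonneg _ _ (le_max_of_le_right zero_le_one), mul_one]
  exact min_le_min (mul_le_mul_of_nonneg_right (le_max_left _ _) hs) (le_max_right _ _)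

lemma hasDerivAt_one_sub_exp_neg_mul (s lam : ℝ) :
    HasDerivAt (fun lam => 1 - exp (-(lam * s))) (s * exp (-(lam * s))) lam := by
  simpa [mul_comm] using ((hasDerivAt_mul_const (x := lam) s).fun_neg.exp).const_sub 1

lemma summable_pow_mul_exp_neg_mul_pow {x Q a : ℝ} (hx : 0 < x) (hQ : 1 < Q) (ha : 0 < a) :
    Summable fun n : ℕ => x ^ n * exp (-(a * Q ^ n)) := by
  have hratio : ∀ n : ℕ, ‖x ^ (n + 1) * exp (-(a * Q ^ (n + 1)))‖ /
      ‖x ^ n * exp (-(a * Q ^ n))‖ = x * exp (-(a * (Q - 1) * Q ^ n)) := by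
    intro n
    have hsplit :
        exp (-(a * Q ^ (n + 1))) = exp (-(a * (Q - 1) * Q ^ n)) * exp (-(a * Q ^ n)) := by
      rw [← exp_add]; ring_nf
    rw [norm_of_nonneg (by positivity), norm_of_nonneg (by positivity),
      div_eq_iff (by positivity), hsplit, pow_succ]
    ring
  have hgrow : Tendsto (fun n : ℕ => a * (Q - 1) * Q ^ n) atTop atTop :=
    (tendsto_pow_atTop_atTop_of_one_lt hQ).const_mul_atTop (by nlinarith)
  refine summable_of_ratio_test_tendsto_lt_one zero_lt_one
    (Eventually.of_forall fun n => by positivity) ?_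
  simp_rw [hratio]
  simpa using (tendsto_exp_neg_atTop_nhds_zero.comp hgrow).const_mul x

lemma lintegral_Ioc_le_tsum {m : Measure ℝ} {f : ℝ → ℝ} {c₁ p K r : ℝ} (hc₁ : 0 ≤ c₁)
    (hp : 0 ≤ p) (hK : 1 < K) (hfr : 0 ≤ f r)
    (hf : ∀ s, 0 < s → s ≤ r → s ^ p * f s ≤ c₁ * (r ^ p * f r)) :
    ∫⁻ s in Ioc 0 r, ENNReal.ofReal (f s) ∂m ≤
      ∑' n : ℕ, ENNReal.ofReal (c₁ * (K ^ p) ^ (n + 1) * f r) * m (Ioc 0 (r / K ^ n)) := by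
  set G : ℕ → ℝ → ℝ≥0∞ := fun n =>
    (Ioc 0 (r / K ^ n)).indicator fun _ => ENNReal.ofReal (c₁ * (K ^ p) ^ (n + 1) * f r)
  have hpoint : ∀ s ∈ Ioc 0 r, ENNReal.ofReal (f s) ≤ ∑' n, G n s := by
    intro s ⟨hs, hsr⟩
    have hr : 0 < r := hs.trans_le hsr
    have hK0 : 0 < K := one_pos.trans hK
    obtain ⟨n, hn, hn'⟩ := exists_nat_pow_near ((one_le_div hs).2 hsr) hK
    have hmem : s ∈ Ioc 0 (r / K ^ n) :=
      ⟨hs, by rw [le_div_iff₀ (by positivity)]; rwa [le_div_iff₀ hs, mul_comm] at hn⟩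
    refine le_trans ?_ (ENNReal.le_tsum n)
    simp only [G, indicator_of_mem hmem]
    refine ENNReal.ofReal_le_ofReal ?_
    have hratio : (r / s) ^ p ≤ (K ^ p) ^ (n + 1) := by
      rw [rpow_pow_comm hK0.le]
      exact rpow_le_rpow (by positivity) hn'.le hp
    calc f s ≤ c₁ * (r ^ p * f r) / s ^ p := by
          rw [le_div_iff₀ (by positivity), mul_comm]; exact hf s hs hsr
      _ = c₁ * (r / s) ^ p * f r := by
          rw [div_rpow hr.le hs.le]; ring
      _ ≤ c₁ * (K ^ p) ^ (n + 1) * f r := by gcongr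
  calc ∫⁻ s in Ioc 0 r, ENNReal.ofReal (f s) ∂m ≤ ∫⁻ s in Ioc 0 r, ∑' n, G n s ∂m :=
        setLIntegral_mono' measurableSet_Ioc hpoint
    _ ≤ ∫⁻ s, ∑' n, G n s ∂m := setLIntegral_le_lintegral _ _
    _ = ∑' n, ∫⁻ s, G n s ∂m :=
        lintegral_tsum fun n => (measurable_const.indicator measurableSet_Ioc).aemeasurable
    _ = _ := tsum_congr fun n => lintegral_indicator_const measurableSet_Ioc _

lemma laplaceExp_zero (ν : Measure ℝ) : laplaceExp ν 0 = 0 := by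
  simp [laplaceExp]

noncomputable def tailIntegral (ν : Measure ℝ) (a : ℝ) : ℝ≥0∞ :=
  ∫⁻ u in Ioo 0 a, ν (Ioi u)

lemma tailIntegral_le_of_measure_Ioi_le {ν : Measure ℝ} {a q x : ℝ} (hx : 0 < x)
    (hq : ∀ v ∈ Ioo 0 a, ENNReal.ofReal q * ν (Ioi v) ≤ ν (Ioi (v / x))) :
    ENNReal.ofReal q * tailIntegral ν a ≤ ENNReal.ofReal x * tailIntegral ν (a / x) := by
  have himage : (fun u => x * u) '' Ioo 0 (a / x) = Ioo 0 a := by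
    rw [image_mul_left_Ioo hx, mul_zero, mul_div_cancel₀ _ hx.ne']
  have hderiv : ∀ u ∈ Ioo 0 (a / x), HasDerivWithinAt (fun u => x * u) x (Ioo 0 (a / x)) u :=
    fun u _ => by simpa using ((hasDerivAt_id u).const_mul x).hasDerivWithinAt
  calc ENNReal.ofReal q * tailIntegral ν a
      = ∫⁻ v in Ioo 0 a, ENNReal.ofReal q * ν (Ioi v) :=
        (lintegral_const_mul' _ _ ENNReal.ofReal_ne_top).symm
    _ ≤ ∫⁻ v in Ioo 0 a, ν (Ioi (v / x)) := setLIntegral_mono' measurableSet_Ioo hq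
    _ = ∫⁻ u in Ioo 0 (a / x), ENNReal.ofReal x * ν (Ioi u) := by
        rw [← himage, lintegral_image_eq_lintegral_abs_deriv_mul measurableSet_Ioo hderiv
          (mul_right_injective₀ hx.ne').injOn]
        refine setLIntegral_congr_fun measurableSet_Ioo fun u _ => ?_
        rw [abs_of_pos hx, mul_div_cancel_left₀ _ hx.ne']
    _ = ENNReal.ofReal x * tailIntegral ν (a / x) :=
        lintegral_const_mul' _ _ ENNReal.ofReal_ne_top

namespace IsLevyMeasure

variable {ν : Measure ℝ} (hν : IsLevyMeasure ν)
include hν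

lemma ae_pos : ∀ᵐ s ∂ν, 0 < s :=
  (measure_eq_zero_iff_ae_notMem.1 hν.supp).mono fun _ hs => not_le.1 hs

lemma ae_one_sub_exp_nonneg {lam : ℝ} (hlam : 0 ≤ lam) :
    ∀ᵐ s ∂ν, 0 ≤ 1 - exp (-(lam * s)) :=
  hν.ae_pos.mono fun _ hs => one_sub_exp_neg_nonneg (mul_nonneg hlam hs.le)

lemma integrable_min_one : Integrable (fun s => min s 1) ν := by
  have h : IntegrableOn (fun s => min s 1) (Ioc 0 1 ∪ Ioi 1) ν := by
    refine IntegrableOn.union ?_ ?_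
    · exact hν.integ.congr_fun (fun s hs => (min_eq_left hs.2).symm) measurableSet_Ioc
    · exact (integrableOn_const (hν.tail_fin 1 one_pos).ne).congr_fun
        (fun s hs => (min_eq_right (le_of_lt hs)).symm) measurableSet_Ioi
  rwa [Ioc_union_Ioi_eq_Ioi zero_le_one, IntegrableOn,
    Measure.restrict_eq_self_of_ae_mem (s := Ioi 0) hν.ae_pos] at h

lemma integrable_of_le_mul_min_one {g : ℝ → ℝ} (hg : Continuous g) (C : ℝ)
    (hle : ∀ s, 0 < s → ‖g s‖ ≤ C * min s 1) : Integrable g ν :=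
  (hν.integrable_min_one.const_mul C).mono' hg.aestronglyMeasurable
    (by filter_upwards [hν.ae_pos] with s hs using hle s hs)

lemma integrable_one_sub_exp {lam : ℝ} (hlam : 0 ≤ lam) :
    Integrable (fun s => 1 - exp (-(lam * s))) ν := by
  refine hν.integrable_of_le_mul_min_one (by fun_prop) (max lam 1) fun s hs => ?_
  rw [Real.norm_of_nonneg (one_sub_exp_neg_nonneg (mul_nonneg hlam hs.le))]
  exact (one_sub_exp_neg_le_min _).trans (min_mul_le_max_mul_min hs.le)

lemma integrable_mul_exp_neg {b : ℝ} (hb : 0 < b) :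
    Integrable (fun s => s * exp (-(b * s))) ν := by
  refine hν.integrable_of_le_mul_min_one (by fun_prop) (max 1 b⁻¹) fun s hs => ?_
  rw [Real.norm_of_nonneg (by positivity), mul_min_of_nonneg _ _ (by positivity), mul_one]
  exact (mul_exp_neg_le_min hb hs.le).trans
    (min_le_min (le_mul_of_one_le_left hs.le (le_max_left _ _)) (le_max_right _ _))

lemma laplaceExp_nonneg {lam : ℝ} (hlam : 0 ≤ lam) : 0 ≤ laplaceExp ν lam :=
  integral_nonneg_of_ae (hν.ae_one_sub_exp_nonneg hlam)

lemma monotoneOn_laplaceExp : MonotoneOn (laplaceExp ν) (Ici 0) := by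
  intro a ha b _ hab
  refine integral_mono_ae (hν.integrable_one_sub_exp ha)
    (hν.integrable_one_sub_exp (ha.trans hab)) ?_
  filter_upwards [hν.ae_pos] with s hs
  have := exp_le_exp.2 (neg_le_neg (mul_le_mul_of_nonneg_right hab hs.le))
  linarith

lemma hasDerivAt_laplaceExp {b : ℝ} (hb : 0 < b) :
    HasDerivAt (laplaceExp ν) (∫ s, s * exp (-(b * s)) ∂ν) b := by
  refine (hasDerivAt_integral_of_dominated_loc_of_deriv_le
    (F := fun lam s => 1 - exp (-(lam * s))) (F' := fun lam s => s * exp (-(lam * s)))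
    (bound := fun s => s * exp (-(b / 2 * s))) (Metric.ball_mem_nhds b (half_pos hb))
    (Eventually.of_forall fun _ => by fun_prop) (hν.integrable_one_sub_exp hb.le)
    (by fun_prop) ?_ (hν.integrable_mul_exp_neg (half_pos hb))
    (Eventually.of_forall fun s lam _ => hasDerivAt_one_sub_exp_neg_mul s lam)).2
  filter_upwards [hν.ae_pos] with s hs lam hlam
  have : b / 2 < lam := by
    linarith [(abs_lt.mp (mem_ball_iff_norm.mp hlam)).1]
  rw [Real.norm_of_nonneg (by positivity)]
  gcongr

lemma continuousOn_laplaceExp_Icc {L : ℝ} (hL : 0 ≤ L) :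
    ContinuousOn (laplaceExp ν) (Icc 0 L) := by
  refine continuousOn_of_dominated (F := fun lam s => 1 - exp (-(lam * s)))
    (fun _ _ => by fun_prop) (fun lam hlam => ?_) (hν.integrable_one_sub_exp hL)
    (Eventually.of_forall fun _ => by fun_prop)
  filter_upwards [hν.ae_pos] with s hs
  have := exp_le_exp.2 (neg_le_neg (mul_le_mul_of_nonneg_right hlam.2 hs.le))
  rw [Real.norm_of_nonneg (one_sub_exp_neg_nonneg (mul_nonneg hlam.1 hs.le))]
  linarith

lemma laplaceExp_le_add_mul_deriv {a b : ℝ} (ha : 0 ≤ a) (hb : 0 < b) :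
    laplaceExp ν a ≤ laplaceExp ν b + (a - b) * deriv (laplaceExp ν) b := by
  have hint_b := hν.integrable_one_sub_exp hb.le
  have hint_deriv := (hν.integrable_mul_exp_neg hb).const_mul (a - b)
  rw [(hν.hasDerivAt_laplaceExp hb).deriv, laplaceExp, laplaceExp, ← integral_const_mul,
    ← integral_add hint_b hint_deriv]
  refine integral_mono (hν.integrable_one_sub_exp ha) (hint_b.add hint_deriv) fun s => ?_
  -- `e^{-as} = e^{-bs} e^{-(a-b)s} ≥ e^{-bs} (1 - (a-b)s)`
  have hsplit : exp (-(a * s)) = exp (-(b * s)) * exp (-((a - b) * s)) := by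
    rw [← exp_add]; ring_nf
  nlinarith [add_one_le_exp (-((a - b) * s)), exp_pos (-(b * s))]

lemma laplaceExp_le_mul_of_deriv_le {C lam : ℝ} (hlam : 0 ≤ lam)
    (hderiv : ∀ b, 0 < b → deriv (laplaceExp ν) b ≤ C) : laplaceExp ν lam ≤ C * lam := by
  have hdiff : DifferentiableOn ℝ (laplaceExp ν) (interior (Icc 0 lam)) := by
    rw [interior_Icc]
    exact fun b hb => (hν.hasDerivAt_laplaceExp hb.1).differentiableAt.differentiableWithinAt
  have hle : ∀ b ∈ interior (Icc 0 lam), deriv (laplaceExp ν) b ≤ C := by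
    rw [interior_Icc]
    exact fun b hb => hderiv b hb.1
  simpa [laplaceExp_zero] using (convex_Icc 0 lam).image_sub_le_mul_sub_of_deriv_le
    (hν.continuousOn_laplaceExp_Icc hlam) hdiff hle 0 ⟨le_rfl, hlam⟩ lam ⟨hlam, le_rfl⟩ hlam

lemma tailIntegral_eq_lintegral_min {a : ℝ} (ha : 0 ≤ a) :
    tailIntegral ν a = ∫⁻ s, ENNReal.ofReal (min s a) ∂ν := by
  have hnn : 0 ≤ᵐ[ν] fun s => min s a := hν.ae_pos.mono fun s hs => le_min hs.le ha
  have hlevel : ∀ u, ν {s | u < min s a} = (Iio a).indicator (fun u => ν (Ioi u)) u := by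
    intro u
    by_cases hu : u < a <;> simp [hu, indicator, Ioi]
  rw [lintegral_eq_lintegral_meas_lt ν hnn (by fun_prop)]
  simp_rw [hlevel]
  rw [lintegral_indicator measurableSet_Iio, Measure.restrict_restrict measurableSet_Iio,
    Iio_inter_Ioi, tailIntegral]

lemma ofReal_laplaceExp {lam : ℝ} (hlam : 0 ≤ lam) :
    ENNReal.ofReal (laplaceExp ν lam) = ∫⁻ s, ENNReal.ofReal (1 - exp (-(lam * s))) ∂ν :=
  ofReal_integral_eq_lintegral_ofReal (hν.integrable_one_sub_exp hlam)
    (hν.ae_one_sub_exp_nonneg hlam)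

lemma ofReal_mul_tailIntegral_inv {lam : ℝ} (hlam : 0 < lam) :
    ENNReal.ofReal lam * tailIntegral ν lam⁻¹ =
      ∫⁻ s, ENNReal.ofReal (min (lam * s) 1) ∂ν := by
  rw [hν.tailIntegral_eq_lintegral_min (inv_nonneg.2 hlam.le),
    ← lintegral_const_mul' _ _ ENNReal.ofReal_ne_top]
  refine lintegral_congr fun s => ?_
  rw [← ENNReal.ofReal_mul hlam.le, mul_min_of_nonneg _ _ hlam.le, mul_inv_cancel₀ hlam.ne']

lemma ofReal_laplaceExp_le {lam : ℝ} (hlam : 0 < lam) :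
    ENNReal.ofReal (laplaceExp ν lam) ≤ ENNReal.ofReal lam * tailIntegral ν lam⁻¹ := by
  rw [hν.ofReal_laplaceExp hlam.le, hν.ofReal_mul_tailIntegral_inv hlam]
  exact lintegral_mono fun s => ENNReal.ofReal_le_ofReal (one_sub_exp_neg_le_min _)

lemma ofReal_mul_tailIntegral_inv_le {lam : ℝ} (hlam : 0 < lam) :
    ENNReal.ofReal lam * tailIntegral ν lam⁻¹ ≤
      ENNReal.ofReal (exp 1) * ENNReal.ofReal (laplaceExp ν lam) := by
  rw [hν.ofReal_laplaceExp hlam.le, hν.ofReal_mul_tailIntegral_inv hlam,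
    ← lintegral_const_mul' _ _ ENNReal.ofReal_ne_top]
  refine lintegral_mono_ae ?_
  filter_upwards [hν.ae_pos] with s hs
  rw [← ENNReal.ofReal_mul (exp_pos 1).le]
  exact ENNReal.ofReal_le_ofReal (min_le_exp_one_mul_one_sub_exp_neg (by positivity))

end IsLevyMeasure

lemma IsPhiInv.monotoneOn {ν : Measure ℝ} {φInv : ℝ → ℝ} (hφInv : IsPhiInv ν φInv)
    (hν : IsLevyMeasure ν) : MonotoneOn φInv (Ioi 0) := by
  intro u hu v hv huv
  by_contra! hlt
  have hφ := hν.monotoneOn_laplaceExp (hφInv v hv).1.le (hφInv u hu).1.le hlt.le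
  rw [(hφInv u hu).2, (hφInv v hv).2] at hφ
  exact hlt.ne' (congrArg φInv (le_antisymm huv hφ))

namespace PolyCond

variable {ν : Measure ℝ} {R₁ : ℝ≥0∞} {c c' β₁ β₂ : ℝ} (hpoly : PolyCond ν R₁ c c' β₁ β₂)
  (hν : IsLevyMeasure ν)
include hpoly hν

lemma ofReal_mul_measure_Ioi_le {v x : ℝ} (hv : 0 < v) (hvR : ENNReal.ofReal v < R₁)
    (hx : 1 ≤ x) : ENNReal.ofReal (c * x ^ β₁) * ν (Ioi v) ≤ ν (Ioi (v / x)) := by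
  have hratio :=
    (hpoly (v / x) v (div_pos hv (one_pos.trans_le hx)) (div_le_self hv.le hx) hvR).1
  rw [div_div_cancel₀ hv.ne'] at hratio
  have hfin := (hν.tail_fin v hv).ne
  rcases (ENNReal.toReal_nonneg (a := ν (Ioi v))).eq_or_lt with h0 | hpos
  · rw [((ENNReal.toReal_eq_zero_iff _).1 h0.symm).resolve_right hfin, mul_zero]
    exact zero_le
  · rw [← ENNReal.ofReal_toReal hfin, ← ENNReal.ofReal_mul' ENNReal.toReal_nonneg]
    exact (ENNReal.ofReal_le_ofReal ((le_div_iff₀ hpos).1 hratio)).trans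
      ENNReal.ofReal_toReal_le

lemma ofReal_mul_tailIntegral_le {a x : ℝ} (haR : ENNReal.ofReal a < R₁) (hx : 1 ≤ x) :
    ENNReal.ofReal (c * x ^ β₁) * tailIntegral ν a ≤
      ENNReal.ofReal x * tailIntegral ν (a / x) :=
  tailIntegral_le_of_measure_Ioi_le (one_pos.trans_le hx) fun _ hv =>
    hpoly.ofReal_mul_measure_Ioi_le hν hv.1 ((ENNReal.ofReal_le_ofReal hv.2.le).trans_lt haR) hx

lemma mul_rpow_mul_laplaceExp_le {lam x : ℝ} (hlam : 0 < lam)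
    (hR : ENNReal.ofReal lam⁻¹ < R₁) (hx : 1 ≤ x) :
    c * x ^ β₁ * laplaceExp ν lam ≤ exp 1 * laplaceExp ν (x * lam) := by
  have hxlam : 0 < x * lam := mul_pos (one_pos.trans_le hx) hlam
  have key : ENNReal.ofReal (c * x ^ β₁) * ENNReal.ofReal (laplaceExp ν lam) ≤
      ENNReal.ofReal (exp 1) * ENNReal.ofReal (laplaceExp ν (x * lam)) :=
    calc _ ≤ ENNReal.ofReal (c * x ^ β₁) * (ENNReal.ofReal lam * tailIntegral ν lam⁻¹) :=
          mul_le_mul_right (hν.ofReal_laplaceExp_le hlam) _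
      _ = ENNReal.ofReal lam * (ENNReal.ofReal (c * x ^ β₁) * tailIntegral ν lam⁻¹) :=
          mul_left_comm _ _ _
      _ ≤ ENNReal.ofReal lam * (ENNReal.ofReal x * tailIntegral ν (lam⁻¹ / x)) :=
          mul_le_mul_right (hpoly.ofReal_mul_tailIntegral_le hν hR hx) _
      _ = ENNReal.ofReal (x * lam) * tailIntegral ν (x * lam)⁻¹ := by
          rw [← mul_assoc, ← ENNReal.ofReal_mul hlam.le, mul_comm lam, div_eq_mul_inv, mul_inv,
            mul_comm lam⁻¹]
      _ ≤ _ := hν.ofReal_mul_tailIntegral_inv_le hxlam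
  rwa [← ENNReal.ofReal_mul' (hν.laplaceExp_nonneg hlam.le), ← ENNReal.ofReal_mul (exp_pos 1).le,
    ENNReal.ofReal_le_ofReal_iff (mul_nonneg (exp_pos 1).le (hν.laplaceExp_nonneg hxlam.le))]
    at key

lemma mul_pow_le_mul_laplaceExp_add_one (hc : 0 ≤ c) (hβ₁ : 0 ≤ β₁) {φInv : ℝ → ℝ}
    (hφInv : IsPhiInv ν φInv) {K t r : ℝ} (hK : 1 ≤ K) (ht : 0 < t) (hr : 0 < r)
    (hrt : r ≤ (φInv t⁻¹)⁻¹) {n₀ : ℕ} (hbase : ENNReal.ofReal (r / K ^ n₀) < R₁) (n : ℕ) :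
    c / (exp 1 * (K ^ β₁) ^ n₀) * (K ^ β₁) ^ n ≤ t * laplaceExp ν (K ^ n / r) + 1 := by
  set lam₀ := K ^ n₀ / r
  have hlam₀ : 0 < lam₀ := by positivity
  obtain ⟨hφInv_pos, hφInv_eq⟩ := hφInv t⁻¹ (inv_pos.2 ht)
  have hφ₀ : t⁻¹ ≤ laplaceExp ν lam₀ := by
    have : φInv t⁻¹ ≤ lam₀ := ((le_inv_comm₀ hr hφInv_pos).1 hrt).trans
      (le_mul_of_one_le_left (by positivity) (one_le_pow₀ hK))
    simpa [hφInv_eq] using hν.monotoneOn_laplaceExp hφInv_pos.le hlam₀.le this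
  have hscale : ∀ j : ℕ,
      c * (K ^ β₁) ^ j * laplaceExp ν lam₀ ≤ exp 1 * laplaceExp ν (K ^ j * lam₀) := by
    intro j
    rw [rpow_pow_comm (by linarith)]
    exact hpoly.mul_rpow_mul_laplaceExp_le hν hlam₀ (by rwa [inv_div]) (one_le_pow₀ hK)
  rcases le_or_gt n₀ n with hn | hn
  · obtain ⟨j, rfl⟩ := Nat.exists_eq_add_of_le hn
    have hKj : K ^ (n₀ + j) / r = K ^ j * lam₀ := by simp only [lam₀]; ring
    have hcoef : c / (exp 1 * (K ^ β₁) ^ n₀) * (K ^ β₁) ^ (n₀ + j) =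
        c * (K ^ β₁) ^ j / exp 1 := by
      rw [pow_add]; field_simp
    have h := (mul_le_mul_of_nonneg_left hφ₀ (by positivity)).trans (hscale j)
    rw [mul_inv_le_iff₀ ht] at h
    rw [hcoef, hKj, div_le_iff₀ (exp_pos 1)]
    nlinarith [exp_pos 1]
  · -- scaling with factor `1` at `λ₀`, where `φ > 0`, forces `c ≤ e`
    have hce : c ≤ exp 1 := by
      have h := hscale 0
      rw [pow_zero, pow_zero, mul_one, one_mul] at h
      exact le_of_mul_le_mul_right h (hφ₀.trans_lt' (inv_pos.2 ht))
    calc c / (exp 1 * (K ^ β₁) ^ n₀) * (K ^ β₁) ^ n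
        ≤ c / (exp 1 * (K ^ β₁) ^ n₀) * (K ^ β₁) ^ n₀ := by
          gcongr
          exact one_le_rpow hK hβ₁
      _ = c / exp 1 := by field_simp
      _ ≤ 1 := (div_le_one (exp_pos 1)).2 hce
      _ ≤ t * laplaceExp ν (K ^ n / r) + 1 := by
          nlinarith [hν.laplaceExp_nonneg (lam := K ^ n / r) (by positivity)]

end PolyCond

namespace IsSigmaFun

variable {ν : Measure ℝ} {σ : ℝ → ℝ → ℝ} (hσ : IsSigmaFun ν σ) {t ρ : ℝ} (ht : 0 < t)
  (hρ : 0 < ρ)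
include hσ ht hρ

lemma cases : (0 < σ t ρ ∧ deriv (laplaceExp ν) (σ t ρ) = ρ / t) ∨
    (σ t ρ = 0 ∧ ∀ lam, 0 < lam → deriv (laplaceExp ν) lam ≤ ρ / t) := by
  by_cases h : ∃ lam, 0 < lam ∧ ρ / t < deriv (laplaceExp ν) lam
  · exact Or.inl ((hσ t ρ ht hρ).1 h)
  · push Not at h
    exact Or.inr ⟨(hσ t ρ ht hρ).2 h, h⟩

lemma nonneg : 0 ≤ σ t ρ := by
  rcases hσ.cases ht hρ with ⟨hpos, -⟩ | ⟨hzero, -⟩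
  exacts [hpos.le, hzero.ge]

lemma mul_Hfun_eq : t * Hfun ν (σ t ρ) = t * laplaceExp ν (σ t ρ) - σ t ρ * ρ := by
  rcases hσ.cases ht hρ with ⟨-, hderiv⟩ | ⟨hzero, -⟩
  · rw [Hfun, hderiv]
    field_simp
  · simp [Hfun, hzero, laplaceExp_zero]

lemma mul_laplaceExp_sub_le (hν : IsLevyMeasure ν) {lam : ℝ} (hlam : 0 ≤ lam) :
    t * laplaceExp ν lam - lam * ρ ≤ t * Hfun ν (σ t ρ) := by
  rw [hσ.mul_Hfun_eq ht hρ]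
  rcases hσ.cases ht hρ with ⟨hpos, hderiv⟩ | ⟨hzero, hderiv⟩
  · have h := mul_le_mul_of_nonneg_left (hν.laplaceExp_le_add_mul_deriv hlam hpos) ht.le
    rw [hderiv, mul_add,
      show t * ((lam - σ t ρ) * (ρ / t)) = (lam - σ t ρ) * ρ by field_simp] at h
    linarith
  · have h := mul_le_mul_of_nonneg_left (hν.laplaceExp_le_mul_of_deriv_le hlam hderiv) ht.le
    rw [show t * (ρ / t * lam) = lam * ρ by field_simp] at h
    rw [hzero, laplaceExp_zero]
    linarith

lemma mul_Hfun_le_of_le (hν : IsLevyMeasure ν) {r : ℝ} (hρr : ρ ≤ r) :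
    t * Hfun ν (σ t r) ≤ t * Hfun ν (σ t ρ) := by
  have hr := hρ.trans_le hρr
  have hσr := hσ.nonneg ht hr
  rw [hσ.mul_Hfun_eq ht hr]
  nlinarith [hσ.mul_laplaceExp_sub_le ht hρ hν hσr]

end IsSigmaFun

namespace IsSubordinatorLaw

variable {ν : Measure ℝ} {μ : ℝ → Measure ℝ} (hsub : IsSubordinatorLaw ν μ)
include hsub

lemma measure_Ioc_le_exp {t lam : ℝ} (ht : 0 < t) (hlam : 0 ≤ lam) (ρ : ℝ) :
    μ t (Ioc 0 ρ) ≤ ENNReal.ofReal (exp (lam * ρ - t * laplaceExp ν lam)) := by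
  have := hsub.prob t ht
  have hint : Integrable (fun s => exp (-lam * s)) (μ t) := by
    refine (integrable_const 1).mono' (by fun_prop) ?_
    filter_upwards [measure_eq_zero_iff_ae_notMem.1 (hsub.nonneg t ht)] with s hs
    rw [Real.norm_of_nonneg (exp_pos _).le, exp_le_one_iff]
    nlinarith [show 0 ≤ s from not_lt.1 hs]
  have hmgf : mgf id (μ t) (-lam) = exp (-(t * laplaceExp ν lam)) := by
    simpa [mgf, neg_mul] using hsub.laplace t lam ht hlam
  have hchernoff := measure_le_le_exp_mul_mgf (X := id) ρ (neg_nonpos.2 hlam) hint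
  rw [hmgf, ← exp_add, neg_neg, ← sub_eq_add_neg] at hchernoff
  refine (measure_mono Ioc_subset_Iic_self).trans ?_
  rw [← ENNReal.ofReal_toReal (measure_ne_top _ _)]
  exact ENNReal.ofReal_le_ofReal hchernoff

variable {σ : ℝ → ℝ → ℝ} (hσ : IsSigmaFun ν σ)
include hσ

lemma measure_Ioc_le_exp_neg_mul_Hfun {t ρ : ℝ} (ht : 0 < t) (hρ : 0 < ρ) :
    μ t (Ioc 0 ρ) ≤ ENNReal.ofReal (exp (-(t * Hfun ν (σ t ρ)))) := by
  rw [hσ.mul_Hfun_eq ht hρ, neg_sub]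
  exact hsub.measure_Ioc_le_exp ht (hσ.nonneg ht hρ) ρ

lemma measure_Ioc_div_pow_le {K Q a t r : ℝ} (hK : 1 ≤ K) (ht : 0 < t) (hr : 0 < r) {n : ℕ}
    (hgrowth : a * Q ^ n ≤ t * laplaceExp ν (K ^ n / r) + 1) :
    μ t (Ioc 0 (r / K ^ n)) ≤
      ENNReal.ofReal (exp 1 * exp (-(a / 2 * Q ^ n)) * exp (-(t / 2 * Hfun ν (σ t r)))) := by
  have hKn : 0 < K ^ n := pow_pos (one_pos.trans_le hK) n
  have hρ : 0 < r / K ^ n := div_pos hr hKn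
  refine (hsub.measure_Ioc_le_exp_neg_mul_Hfun hσ ht hρ).trans (ENNReal.ofReal_le_ofReal ?_)
  rw [← exp_add, ← exp_add, exp_le_exp]
  have hmono := hσ.mul_Hfun_le_of_le ht hρ hsub.levy (div_le_self hr.le (one_le_pow₀ hK))
  have hlegendre := hσ.mul_laplaceExp_sub_le ht hρ hsub.levy (lam := K ^ n / r) (by positivity)
  rw [div_mul_div_cancel₀ hr.ne', div_self hKn.ne'] at hlegendre
  linarith

lemma exists_setIntegral_Ioc_le {f : ℝ → ℝ} (hf_meas : Measurable f)
    (hf_pos : ∀ s : ℝ, 0 < s → 0 < f s) {c₁ p : ℝ} (hc₁ : 0 < c₁) (hp : 0 < p)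
    (hf : ∀ s t : ℝ, 0 < s → s ≤ t → s ^ p * f s ≤ c₁ * (t ^ p * f t))
    {K Q a : ℝ} (hK : 1 < K) (hQ : 1 < Q) (ha : 0 < a) :
    ∃ C : ℝ, 0 < C ∧ ∀ t r : ℝ, 0 < t → 0 < r →
      (∀ n : ℕ, a * Q ^ n ≤ t * laplaceExp ν (K ^ n / r) + 1) →
        ∫ s in Ioc 0 r, f s ∂(μ t) ≤ C * (f r * exp (-(t / 2 * Hfun ν (σ t r)))) := by
  set b : ℕ → ℝ := fun n => (K ^ p) ^ (n + 1) * exp (-(a / 2 * Q ^ n))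
  have hKp : 0 < K ^ p := rpow_pos_of_pos (one_pos.trans hK) p
  have hb : Summable b := by
    simpa [b, pow_succ', mul_assoc] using
      (summable_pow_mul_exp_neg_mul_pow hKp hQ (half_pos ha)).mul_left (K ^ p)
  have hb_pos : 0 < ∑' n, b n := hb.tsum_pos (fun n => by positivity) 0 (by positivity)
  refine ⟨c₁ * exp 1 * ∑' n, b n, by positivity, fun t r ht hr hgrowth => ?_⟩
  set E := exp (-(t / 2 * Hfun ν (σ t r)))
  have hfr := hf_pos r hr
  have hlintegral : ∫⁻ s in Ioc 0 r, ENNReal.ofReal (f s) ∂(μ t) ≤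
      ENNReal.ofReal (c₁ * exp 1 * (∑' n, b n) * (f r * E)) :=
    calc ∫⁻ s in Ioc 0 r, ENNReal.ofReal (f s) ∂(μ t)
        ≤ ∑' n : ℕ, ENNReal.ofReal (c₁ * (K ^ p) ^ (n + 1) * f r) * μ t (Ioc 0 (r / K ^ n)) :=
          lintegral_Ioc_le_tsum hc₁.le hp.le hK hfr.le fun s hs hsr => hf s r hs hsr
      _ ≤ ∑' n : ℕ, ENNReal.ofReal (c₁ * (K ^ p) ^ (n + 1) * f r) *
            ENNReal.ofReal (exp 1 * exp (-(a / 2 * Q ^ n)) * E) :=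
          ENNReal.tsum_le_tsum fun n => mul_le_mul_right
            (hsub.measure_Ioc_div_pow_le hσ hK.le ht hr (hgrowth n)) _
      _ = ∑' n : ℕ, ENNReal.ofReal (c₁ * exp 1 * (f r * E) * b n) := by
          refine tsum_congr fun n => ?_
          rw [← ENNReal.ofReal_mul (by positivity)]
          congr 1
          ring
      _ = ENNReal.ofReal (c₁ * exp 1 * (∑' n, b n) * (f r * E)) := by
          rw [← ENNReal.ofReal_tsum_of_nonneg (fun n => by positivity) (hb.mul_left _),
            tsum_mul_left]
          congr 1
          ring
  rw [integral_eq_lintegral_of_nonneg_ae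
    ((ae_restrict_mem measurableSet_Ioc).mono fun s hs => (hf_pos s hs.1).le)
    hf_meas.aestronglyMeasurable]
  exact ENNReal.toReal_le_of_le_ofReal (by positivity) hlintegral

end IsSubordinatorLaw

theorem left_integral_bound_general
    (ν : Measure ℝ) (μ : ℝ → Measure ℝ) (hsub : IsSubordinatorLaw ν μ)
    (σ : ℝ → ℝ → ℝ) (hσ : IsSigmaFun ν σ)
    (φInv : ℝ → ℝ) (hφInv : IsPhiInv ν φInv)
    (R₁ : ℝ≥0∞) (c c' β₁ β₂ : ℝ)
    (hR₁ : 0 < R₁) (hc : 0 < c) (hβ₁ : 0 < β₁)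
    (hpoly : PolyCond ν R₁ c c' β₁ β₂)
    (f : ℝ → ℝ) (hf_meas : Measurable f) (hf_pos : ∀ s : ℝ, 0 < s → 0 < f s)
    (c₁ p : ℝ) (hc₁ : 0 < c₁) (hp : 0 < p)
    (hf : ∀ s t : ℝ, 0 < s → s ≤ t → s ^ p * f s ≤ c₁ * (t ^ p * f t)) :
    (∀ T : ℝ, 0 < T → ∃ C : ℝ, 0 < C ∧
      ∀ t r : ℝ, 0 < t → t ≤ T → 0 < r → r ≤ (φInv (t⁻¹))⁻¹ →
        (∫ s in Set.Ioc (0:ℝ) r, f s ∂(μ t)) ≤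
          C * (f r * Real.exp (-(t / 2 * Hfun ν (σ t r))))) ∧
    (R₁ = ⊤ → ∃ C : ℝ, 0 < C ∧
      ∀ t r : ℝ, 0 < t → 0 < r → r ≤ (φInv (t⁻¹))⁻¹ →
        (∫ s in Set.Ioc (0:ℝ) r, f s ∂(μ t)) ≤
          C * (f r * Real.exp (-(t / 2 * Hfun ν (σ t r))))) := by
  have hν := hsub.levy
  have hbound (n₀ : ℕ) := hsub.exists_setIntegral_Ioc_le hσ hf_meas hf_pos hc₁ hp hf one_lt_two
    (one_lt_rpow one_lt_two hβ₁) (a := c / (exp 1 * (2 ^ β₁) ^ n₀)) (by positivity)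
  refine ⟨fun T hT => ?_, fun hR₁_top => ?_⟩
  · obtain ⟨a₁, -, ha₁, ha₁R⟩ := ENNReal.lt_iff_exists_real_btwn.1 hR₁
    obtain ⟨n₀, hn₀⟩ := pow_unbounded_of_one_lt ((φInv T⁻¹)⁻¹ / a₁) one_lt_two
    rw [div_lt_iff₀ (ENNReal.ofReal_pos.1 ha₁)] at hn₀
    obtain ⟨C, hC, hCbound⟩ := hbound n₀
    refine ⟨C, hC, fun t r ht htT hr hrt => hCbound t r ht hr
      (hpoly.mul_pow_le_mul_laplaceExp_add_one hν hc.le hβ₁.le hφInv one_le_two ht hr hrt ?_)⟩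
    have hrT : r ≤ (φInv T⁻¹)⁻¹ := hrt.trans (inv_anti₀ (hφInv T⁻¹ (inv_pos.2 hT)).1
      (hφInv.monotoneOn hν (inv_pos.2 hT) (inv_pos.2 ht) (inv_anti₀ ht htT)))
    refine lt_of_le_of_lt (ENNReal.ofReal_le_ofReal ?_) ha₁R
    rw [div_le_iff₀ (by positivity)]
    linarith
  · obtain ⟨C, hC, hCbound⟩ := hbound 0
    exact ⟨C, hC, fun t r ht hr hrt =>
      hCbound t r ht hr (hpoly.mul_pow_le_mul_laplaceExp_add_one hν hc.le hβ₁.le hφInv one_le_two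
        ht hr hrt (by simp [hR₁_top]))⟩

/-- Lemma 2.6: under (Poly-R₁), for `f` with `s^p f(s) ≤ c₁ t^p f(t)` for `0 < s ≤ t`,
and for every `T > 0`, `E[f(S_t); S_t ≤ r] ≤ C f(r) exp(-(t/2) H(σ(t,r)))` for
`t ∈ (0,T]` and `0 < r ≤ 1/φ⁻¹(1/t)`; under (Poly-∞) this holds for all `t > 0`. -/
theorem left_integral_bound
    (ν : Measure ℝ) (μ : ℝ → Measure ℝ) (hsub : IsSubordinatorLaw ν μ)
    (σ : ℝ → ℝ → ℝ) (hσ : IsSigmaFun ν σ)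
    (φInv : ℝ → ℝ) (hφInv : IsPhiInv ν φInv)
    (R₁ : ℝ≥0∞) (c c' β₁ β₂ : ℝ)
    (hR₁ : 0 < R₁) (hc : 0 < c) (hc' : 0 < c') (hβ₁ : 0 < β₁) (hβ : β₁ ≤ β₂)
    (hpoly : PolyCond ν R₁ c c' β₁ β₂)
    (f : ℝ → ℝ) (hf_meas : Measurable f) (hf_pos : ∀ s : ℝ, 0 < s → 0 < f s)
    (c₁ p : ℝ) (hc₁ : 0 < c₁) (hp : 0 < p)
    (hf : ∀ s t : ℝ, 0 < s → s ≤ t → s ^ p * f s ≤ c₁ * (t ^ p * f t)) :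
    (∀ T : ℝ, 0 < T → ∃ C : ℝ, 0 < C ∧
      ∀ t r : ℝ, 0 < t → t ≤ T → 0 < r → r ≤ (φInv (t⁻¹))⁻¹ →
        (∫ s in Set.Ioc (0:ℝ) r, f s ∂(μ t)) ≤
          C * (f r * Real.exp (-(t / 2 * Hfun ν (σ t r))))) ∧
    (R₁ = ⊤ → ∃ C : ℝ, 0 < C ∧
      ∀ t r : ℝ, 0 < t → 0 < r → r ≤ (φInv (t⁻¹))⁻¹ →
        (∫ s in Set.Ioc (0:ℝ) r, f s ∂(μ t)) ≤
          C * (f r * Real.exp (-(t / 2 * Hfun ν (σ t r))))) :=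
  left_integral_bound_general ν μ hsub σ hσ φInv hφInv R₁ c c' β₁ β₂ hR₁ hc hβ₁ hpoly f hf_meas
    hf_pos c₁ p hc₁ hp hf
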